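/- arXiv:1207.7252 — 3 statements merged into one kernel-verified Lean document; each statement's English description precedes it below -/
import Mathlib

section
/- If K, L are convex bodies in R^n such that K ∪ L is convex, then (K ∪ L) + (K ∩ L) = K + L, where + denotes Minkowski addition. -/
open scoped Pointwise

theorem stmt5 {n : ℕ} (K L : Set (EuclideanSpace ℝ (Fin n)))
    (hK : K.Nonempty) (hKc : IsCompact K) (hKconv : Convex ℝ K)
    (hL : L.Nonempty) (hLc : IsCompact L) (hLconv : Convex ℝ L)
    (hU : Convex ℝ (K ∪ L)) :
    (K ∪ L) + (K ∩ L) = K + L := by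
  apply Set.Subset.antisymm
  · rintro x ⟨u, hu, v, ⟨hvK, hvL⟩, rfl⟩
    rcases hu with hu | hu
    · exact ⟨u, hu, v, hvL, rfl⟩
    · exact ⟨v, hvK, u, hu, by abel⟩
  · rintro x ⟨k, hk, l, hl, rfl⟩
    set f : ℝ → EuclideanSpace ℝ (Fin n) := fun t => (1 - t) • k + t • l with hf
    have hfc : Continuous f := by fun_prop
    have hcover : Set.Icc (0:ℝ) 1 ⊆ f ⁻¹' K ∪ f ⁻¹' L := by
      intro t ht
      show f t ∈ K ∪ L
      exact hU (Or.inl hk) (Or.inr hl) (by linarith [ht.2]) ht.1 (by ring)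
    have hne1 : (Set.Icc (0:ℝ) 1 ∩ f ⁻¹' K).Nonempty := by
      refine ⟨0, Set.mem_Icc.2 ⟨le_refl _, zero_le_one⟩, ?_⟩
      simp [hf, hk]
    have hne2 : (Set.Icc (0:ℝ) 1 ∩ f ⁻¹' L).Nonempty := by
      refine ⟨1, Set.mem_Icc.2 ⟨zero_le_one, le_refl _⟩, ?_⟩
      simp [hf, hl]
    obtain ⟨t, ht, htK, htL⟩ :=
      (isPreconnected_closed_iff.mp isPreconnected_Icc) (f ⁻¹' K) (f ⁻¹' L)
        (hKc.isClosed.preimage hfc) (hLc.isClosed.preimage hfc) hcover hne1 hne2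
    refine ⟨t • k + (1 - t) • l, ?_, f t, ⟨htK, htL⟩, ?_⟩
    · exact hU (Or.inl hk) (Or.inr hl) ht.1 (by linarith [ht.2]) (by ring)
    · simp only [hf]
      module
end

section
/- Let g be a difference of support functions on S^{n-1}, g = h(L,·) − h(M,·) with L, M convex bodies with nonempty interior. If ⟨g, μ⟩ ≥ 0 for every nonnegative measure μ on S^{n-1} with center of mass at the origin, then there is x ∈ R^n with g(u) + x·u ≥ 0 for all u ∈ S^{n-1}. -/
open MeasureTheory
open scoped RealInnerProductSpace

noncomputable def suppFn {n : ℕ} (K : Set (EuclideanSpace ℝ (Fin n)))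
    (x : EuclideanSpace ℝ (Fin n)) : ℝ :=
  sSup ((fun y => ⟪x, y⟫) '' K)

theorem stmt15_aux {n : ℕ} (g : EuclideanSpace ℝ (Fin n) → ℝ) (C : ℝ)
    (hgC : ∀ u : EuclideanSpace ℝ (Fin n), ‖u‖ = 1 → |g u| ≤ C)
    (h : ∀ μ : Measure (EuclideanSpace ℝ (Fin n)), IsFiniteMeasure μ →
      μ (Metric.sphere (0 : EuclideanSpace ℝ (Fin n)) 1)ᶜ = 0 →
      (∫ u, u ∂μ) = 0 → 0 ≤ ∫ u, g u ∂μ) :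
    ∃ x : EuclideanSpace ℝ (Fin n),
      ∀ u ∈ Metric.sphere (0 : EuclideanSpace ℝ (Fin n)) 1, 0 ≤ g u + ⟪x, u⟫ := by
  classical
  -- key0 : centered finite combinations give nonnegative g-sum
  have key0 : ∀ (m : ℕ) (c : Fin m → ℝ) (u : Fin m → EuclideanSpace ℝ (Fin n)),
      (∀ i, 0 ≤ c i) →
      (∀ i, ‖u i‖ = 1) → (∑ i, c i • u i) = 0 → 0 ≤ ∑ i, c i * g (u i) := by
    intro m c u hc hu hsum
    set μ : Measure (EuclideanSpace ℝ (Fin n)) :=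
      ∑ i : Fin m, (ENNReal.ofReal (c i)) • Measure.dirac (u i) with hμ
    have hint : ∀ (f : EuclideanSpace ℝ (Fin n) → ℝ) (a : EuclideanSpace ℝ (Fin n)),
        Integrable f (Measure.dirac a) := fun f a =>
      (integrable_const (f a)).congr (MeasureTheory.ae_eq_dirac f).symm
    have hintE : ∀ (f : EuclideanSpace ℝ (Fin n) → EuclideanSpace ℝ (Fin n))
        (a : EuclideanSpace ℝ (Fin n)), Integrable f (Measure.dirac a) := fun f a =>
      (integrable_const (f a)).congr (MeasureTheory.ae_eq_dirac f).symm
    have hfin : IsFiniteMeasure μ := by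
      constructor
      rw [hμ]
      simp only [Measure.coe_finset_sum, Finset.sum_apply, Measure.smul_apply,
        smul_eq_mul]
      refine ENNReal.sum_lt_top.mpr fun i _ => ?_
      simp [Measure.dirac_apply_of_mem (Set.mem_univ _)]
    have hnull : μ (Metric.sphere (0 : EuclideanSpace ℝ (Fin n)) 1)ᶜ = 0 := by
      rw [hμ]
      simp only [Measure.coe_finset_sum, Finset.sum_apply, Measure.smul_apply,
        smul_eq_mul]
      refine Finset.sum_eq_zero fun i _ => ?_
      have : Measure.dirac (u i) (Metric.sphere (0 : EuclideanSpace ℝ (Fin n)) 1)ᶜ = 0 := by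
        rw [Measure.dirac_apply' _ (Metric.isClosed_sphere.measurableSet.compl)]
        refine Set.indicator_of_notMem ?_ _
        simp only [Set.mem_compl_iff, not_not, mem_sphere_zero_iff_norm]
        exact hu i
      rw [this, mul_zero]
    have hIg : ∫ v, g v ∂μ = ∑ i, c i * g (u i) := by
      rw [hμ, integral_finset_sum_measure (fun i _ => (hint g (u i)).smul_measure
        ENNReal.ofReal_ne_top)]
      refine Finset.sum_congr rfl fun i _ => ?_
      rw [integral_smul_measure, ENNReal.toReal_ofReal (hc i), integral_dirac,
        smul_eq_mul]
    have hIid : ∫ v, v ∂μ = 0 := by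
      rw [hμ, integral_finset_sum_measure (fun i _ =>
        (hintE (fun v => v) (u i)).smul_measure ENNReal.ofReal_ne_top)]
      calc ∑ i, ∫ v, v ∂((ENNReal.ofReal (c i)) • Measure.dirac (u i))
          = ∑ i, c i • u i := by
            refine Finset.sum_congr rfl fun i _ => ?_
            rw [integral_smul_measure, ENNReal.toReal_ofReal (hc i), integral_dirac]
        _ = 0 := hsum
    have := h μ hfin hnull hIid
    rwa [hIg] at this
  -- key : general bound
  have key : ∀ (m : ℕ) (c : Fin m → ℝ) (u : Fin m → EuclideanSpace ℝ (Fin n)),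
      (∀ i, 0 ≤ c i) →
      (∀ i, ‖u i‖ = 1) → -(C * ‖∑ i, c i • u i‖) ≤ ∑ i, c i * g (u i) := by
    intro m c u hc hu
    set w : EuclideanSpace ℝ (Fin n) := ∑ i, c i • u i with hw
    by_cases hw0 : w = 0
    · rw [hw0]
      simpa using key0 m c u hc hu (hw ▸ hw0)
    · set v : EuclideanSpace ℝ (Fin n) := (-‖w‖⁻¹) • w with hv
      have hnw : (0:ℝ) < ‖w‖ := norm_pos_iff.mpr hw0
      have hvnorm : ‖v‖ = 1 := by
        rw [hv, norm_smul, norm_neg, norm_inv, norm_norm]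
        field_simp
      set c' : Fin (m+1) → ℝ := Fin.snoc c ‖w‖ with hc'
      set u' : Fin (m+1) → EuclideanSpace ℝ (Fin n) := Fin.snoc u v with hu'
      have hc'0 : ∀ i, 0 ≤ c' i := by
        intro i
        refine Fin.lastCases ?_ ?_ i
        · simp [hc', le_of_lt hnw]
        · intro j; simp [hc', hc j]
      have hu'1 : ∀ i, ‖u' i‖ = 1 := by
        intro i
        refine Fin.lastCases ?_ ?_ i
        · simp [hu', hvnorm]
        · intro j; simp [hu', hu j]
      have hsum0 : (∑ i, c' i • u' i) = 0 := by
        rw [Fin.sum_univ_castSucc]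
        simp only [hc', hu', Fin.snoc_castSucc, Fin.snoc_last]
        rw [← hw, hv, smul_smul, mul_neg, mul_inv_cancel₀ (ne_of_gt hnw)]
        simp
      have h0 := key0 (m+1) c' u' hc'0 hu'1 hsum0
      rw [Fin.sum_univ_castSucc] at h0
      simp only [hc', hu', Fin.snoc_castSucc, Fin.snoc_last] at h0
      nlinarith [abs_le.mp (hgC v hvnorm)]
  -- the cone
  set T : Set (EuclideanSpace ℝ (Fin n) × ℝ) :=
    {p | ∃ (m : ℕ) (c : Fin m → ℝ) (u : Fin m → EuclideanSpace ℝ (Fin n)),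
    (∀ i, 0 ≤ c i) ∧ (∀ i, ‖u i‖ = 1) ∧ p.1 = ∑ i, c i • u i ∧
    p.2 = ∑ i, c i * g (u i)} with hT
  have h0T : (0 : EuclideanSpace ℝ (Fin n) × ℝ) ∈ T :=
    ⟨0, 0, 0, fun i => le_refl _, fun i => i.elim0, by simp, by simp⟩
  have hsmulT : ∀ (t : ℝ), 0 ≤ t → ∀ p ∈ T, t • p ∈ T := by
    rintro t ht p ⟨m, c, u, hc, hu, h1, h2⟩
    refine ⟨m, fun i => t * c i, u, fun i => mul_nonneg ht (hc i), hu, ?_, ?_⟩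
    · show t • p.1 = _
      rw [h1, Finset.smul_sum]
      simp [smul_smul]
    · show t * p.2 = _
      rw [h2, Finset.mul_sum]
      simp [mul_assoc]
  have haddT : ∀ p ∈ T, ∀ q ∈ T, p + q ∈ T := by
    rintro p ⟨m, c, u, hc, hu, h1, h2⟩ q ⟨m', c', u', hc', hu', h1', h2'⟩
    refine ⟨m + m', Fin.append c c', Fin.append u u', ?_, ?_, ?_, ?_⟩
    · intro i
      refine Fin.addCases (fun j => ?_) (fun j => ?_) i
      · rw [Fin.append_left]; exact hc j
      · rw [Fin.append_right]; exact hc' j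
    · intro i
      refine Fin.addCases (fun j => ?_) (fun j => ?_) i
      · rw [Fin.append_left]; exact hu j
      · rw [Fin.append_right]; exact hu' j
    · show p.1 + q.1 = _
      rw [h1, h1', Fin.sum_univ_add]
      simp [Fin.append_left, Fin.append_right]
    · show p.2 + q.2 = _
      rw [h2, h2', Fin.sum_univ_add]
      simp [Fin.append_left, Fin.append_right]
  have hconvT : Convex ℝ T := by
    intro p hp q hq a b ha hb hab
    exact haddT _ (hsmulT a ha p hp) _ (hsmulT b hb q hq)
  have hTD : T ⊆ {p : EuclideanSpace ℝ (Fin n) × ℝ | -(C * ‖p.1‖) ≤ p.2} := by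
    rintro p ⟨m, c, u, hc, hu, h1, h2⟩
    simp only [Set.mem_setOf_eq, h1, h2]
    exact key m c u hc hu
  have hDclosed : IsClosed {p : EuclideanSpace ℝ (Fin n) × ℝ | -(C * ‖p.1‖) ≤ p.2} :=
    isClosed_le ((continuous_const.mul (continuous_norm.comp continuous_fst)).neg) continuous_snd
  have hnotin : ((0 : EuclideanSpace ℝ (Fin n)), (-1 : ℝ)) ∉ closure T := by
    intro hmem
    have := closure_minimal hTD hDclosed hmem
    simp only [Set.mem_setOf_eq, norm_zero, mul_zero, neg_zero] at this
    linarith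
  obtain ⟨f, r, hfr, hr⟩ := geometric_hahn_banach_closed_point
    hconvT.closure isClosed_closure hnotin
  have hr0 : (0:ℝ) < r := by
    have := hfr 0 (subset_closure h0T)
    rwa [map_zero] at this
  have hfle : ∀ p ∈ T, f p ≤ 0 := by
    intro p hp
    by_contra hpos
    push_neg at hpos
    have ht : (0:ℝ) ≤ (r + 1) / f p := div_nonneg (by linarith) (le_of_lt hpos)
    have := hfr (((r + 1) / f p) • p) (subset_closure (hsmulT _ ht p hp))
    rw [f.map_smul, smul_eq_mul, div_mul_cancel₀ _ (ne_of_gt hpos)] at this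
    linarith
  -- decompose f
  set a : ℝ := f (0, 1) with ha
  have hfneg : f ((0 : EuclideanSpace ℝ (Fin n)), (-1:ℝ)) = -a := by
    have : ((0 : EuclideanSpace ℝ (Fin n)), (-1:ℝ)) =
        -((0 : EuclideanSpace ℝ (Fin n)), (1:ℝ)) := by simp [Prod.ext_iff]
    rw [this, map_neg, ha]
  have ha0 : a < 0 := by
    rw [hfneg] at hr
    linarith
  set b : ℝ := -a with hb
  have hb0 : 0 < b := by rw [hb]; linarith
  set φ : EuclideanSpace ℝ (Fin n) →L[ℝ] ℝ :=
    f.comp (ContinuousLinearMap.inl ℝ (EuclideanSpace ℝ (Fin n)) ℝ) with hφ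
  have hφapp : ∀ u : EuclideanSpace ℝ (Fin n), φ u = f (u, 0) := fun u => rfl
  have hdecomp : ∀ (u : EuclideanSpace ℝ (Fin n)) (s : ℝ), f (u, s) = φ u + s * a := by
    intro u s
    have : ((u, s) : EuclideanSpace ℝ (Fin n) × ℝ) = (u, 0) + s • (0, 1) := by
      simp [Prod.ext_iff]
    rw [this, map_add, f.map_smul, hφapp, smul_eq_mul, ha]
  set z : EuclideanSpace ℝ (Fin n) :=
    (InnerProductSpace.toDual ℝ (EuclideanSpace ℝ (Fin n))).symm φ with hz
  have hzφ : ∀ u : EuclideanSpace ℝ (Fin n), ⟪z, u⟫ = φ u := fun u =>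
    InnerProductSpace.toDual_symm_apply
  refine ⟨(-b⁻¹) • z, fun u hu => ?_⟩
  have hu1 : ‖u‖ = 1 := mem_sphere_zero_iff_norm.mp hu
  have hmemT : ((u, g u) : EuclideanSpace ℝ (Fin n) × ℝ) ∈ T := by
    refine ⟨1, fun _ => 1, fun _ => u, fun i => zero_le_one, fun i => hu1, ?_, ?_⟩
    · simp
    · simp
  have hle := hfle _ hmemT
  rw [hdecomp u (g u)] at hle
  have hφu : φ u ≤ b * g u := by
    rw [hb]; nlinarith
  have hgoal : g u + (-b⁻¹) * φ u = b⁻¹ * (b * g u - φ u) := by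
    field_simp
    ring
  rw [real_inner_smul_left, hzφ, hgoal]
  exact mul_nonneg (by positivity) (by linarith)

theorem stmt15 {n : ℕ} (L M : Set (EuclideanSpace ℝ (Fin n)))
    (hLc : IsCompact L) (hLconv : Convex ℝ L) (hLint : (interior L).Nonempty)
    (hMc : IsCompact M) (hMconv : Convex ℝ M) (hMint : (interior M).Nonempty)
    (g : EuclideanSpace ℝ (Fin n) → ℝ) (hg : g = fun u => suppFn L u - suppFn M u)
    (h : ∀ μ : Measure (EuclideanSpace ℝ (Fin n)), IsFiniteMeasure μ →
      μ (Metric.sphere (0 : EuclideanSpace ℝ (Fin n)) 1)ᶜ = 0 →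
      (∫ u, u ∂μ) = 0 → 0 ≤ ∫ u, g u ∂μ) :
    ∃ x : EuclideanSpace ℝ (Fin n),
      ∀ u ∈ Metric.sphere (0 : EuclideanSpace ℝ (Fin n)) 1, 0 ≤ g u + ⟪x, u⟫ := by
  have suppBound : ∀ (K : Set (EuclideanSpace ℝ (Fin n))), IsCompact K → K.Nonempty →
      ∃ R : ℝ, ∀ u : EuclideanSpace ℝ (Fin n), ‖u‖ = 1 → |suppFn K u| ≤ R := by
    intro K hKc hKne
    obtain ⟨R, hR0, hRK⟩ := hKc.isBounded.subset_closedBall_lt 0 0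
    refine ⟨R, fun u hu => ?_⟩
    obtain ⟨y0, hy0⟩ := hKne
    have hbdd : BddAbove ((fun y => ⟪u, y⟫) '' K) := by
      refine ⟨R, fun z hz => ?_⟩
      obtain ⟨y, hy, rfl⟩ := hz
      calc ⟪u, y⟫ ≤ ‖u‖ * ‖y‖ := real_inner_le_norm u y
        _ ≤ 1 * R := mul_le_mul (le_of_eq hu)
            (mem_closedBall_zero_iff.mp (hRK hy)) (norm_nonneg y) zero_le_one
        _ = R := one_mul R
    rw [abs_le]
    constructor
    · have h1 : ⟪u, y0⟫ ≤ suppFn K u := le_csSup hbdd ⟨y0, hy0, rfl⟩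
      have h2 : -R ≤ ⟪u, y0⟫ := by
        have h3 := abs_real_inner_le_norm u y0
        have hy0R : ‖y0‖ ≤ R := mem_closedBall_zero_iff.mp (hRK hy0)
        rw [hu, one_mul] at h3
        have := (abs_le.mp h3).1
        linarith
      linarith
    · refine csSup_le ⟨_, Set.mem_image_of_mem _ hy0⟩ fun z hz => ?_
      obtain ⟨y, hy, rfl⟩ := hz
      calc ⟪u, y⟫ ≤ ‖u‖ * ‖y‖ := real_inner_le_norm u y
        _ ≤ 1 * R := mul_le_mul (le_of_eq hu)
            (mem_closedBall_zero_iff.mp (hRK hy)) (norm_nonneg y) zero_le_one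
        _ = R := one_mul R
  obtain ⟨RL, hRL⟩ := suppBound L hLc (hLint.mono interior_subset)
  obtain ⟨RM, hRM⟩ := suppBound M hMc (hMint.mono interior_subset)
  refine stmt15_aux g (RL + RM) (fun u hu => ?_) h
  rw [hg]
  calc |suppFn L u - suppFn M u| ≤ |suppFn L u| + |suppFn M u| := abs_sub _ _
    _ ≤ RL + RM := add_le_add (hRL u hu) (hRM u hu)
end

section
/- Let L be a convex body in R^n and C a convex cone. If the support function of L is linear on C, i.e., if for all v₁, v₂ ∈ C, h(L, v₁) + h(L, v₂) = h(L, v₁ + v₂), then the face of L with outer normals in the interior of C is a single point. -/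
open scoped RealInnerProductSpace

lemma inner_le_suppFn {n : ℕ} {L : Set (EuclideanSpace ℝ (Fin n))}
    (hLc : IsCompact L) {x y : EuclideanSpace ℝ (Fin n)} (hy : y ∈ L) :
    ⟪x, y⟫ ≤ suppFn L x := by
  have hc : Continuous fun z : EuclideanSpace ℝ (Fin n) => ⟪x, z⟫ :=
    continuous_const.inner continuous_id
  exact le_csSup (hLc.image hc).bddAbove ⟨y, hy, rfl⟩

lemma exists_suppFn {n : ℕ} {L : Set (EuclideanSpace ℝ (Fin n))}
    (hL : L.Nonempty) (hLc : IsCompact L) (x : EuclideanSpace ℝ (Fin n)) :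
    ∃ y ∈ L, ⟪x, y⟫ = suppFn L x := by
  have hc : Continuous fun z : EuclideanSpace ℝ (Fin n) => ⟪x, z⟫ :=
    continuous_const.inner continuous_id
  have := (hLc.image hc).sSup_mem (hL.image _)
  obtain ⟨y, hy, hxy⟩ := this
  exact ⟨y, hy, hxy⟩

theorem stmt18 {n : ℕ} (L : Set (EuclideanSpace ℝ (Fin n)))
    (hL : L.Nonempty) (hLc : IsCompact L) (hLconv : Convex ℝ L)
    (C : ConvexCone ℝ (EuclideanSpace ℝ (Fin n)))
    -- the support function of L is additive (linear) on the convex cone C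
    (hadd : ∀ v₁ ∈ C, ∀ v₂ ∈ C, suppFn L v₁ + suppFn L v₂ = suppFn L (v₁ + v₂)) :
    -- the face of L with outer normals in the interior of C is a single point:
    ∃ y : EuclideanSpace ℝ (Fin n),
      ∀ u ∈ interior (C : Set (EuclideanSpace ℝ (Fin n))),
        {y' ∈ L | ⟪y', u⟫ = suppFn L u} = {y} := by
  by_cases hi : (interior (C : Set (EuclideanSpace ℝ (Fin n)))).Nonempty
  swap
  · exact ⟨hL.some, fun u hu => absurd ⟨u, hu⟩ hi⟩
  obtain ⟨u₀, hu₀⟩ := hi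
  -- key uniqueness lemma
  have key : ∀ u ∈ interior (C : Set (EuclideanSpace ℝ (Fin n))),
      ∀ y₁ ∈ L, ∀ y₂ ∈ L, ⟪u, y₁⟫ = suppFn L u → ⟪u, y₂⟫ = suppFn L u → y₁ = y₂ := by
    intro u hu y₁ hy₁ y₂ hy₂ he₁ he₂
    obtain ⟨r, hr, hball⟩ : ∃ r > 0, Metric.ball u r ⊆ (C : Set (EuclideanSpace ℝ (Fin n))) :=
      Metric.mem_nhds_iff.mp (mem_interior_iff_mem_nhds.mp hu)
    have hinner : ∀ v ∈ Metric.ball u r, ⟪v, y₁⟫ = ⟪v, y₂⟫ := by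
      intro v hv
      set ε : ℝ := r / (2 * (‖v‖ + 1)) with hεdef
      have hvnorm : (0:ℝ) < ‖v‖ + 1 := by positivity
      have hε : 0 < ε := by positivity
      have hεv : ε • v ∈ C := C.smul_mem hε (hball hv)
      have hεvn : ε * ‖v‖ < r := by
        rw [hεdef]
        rw [div_mul_eq_mul_div, div_lt_iff₀ (by positivity)]
        nlinarith [norm_nonneg v]
      have huv : u - ε • v ∈ C := by
        apply hball
        simp only [Metric.mem_ball, dist_eq_norm]
        have : u - ε • v - u = -(ε • v) := by abel
        rw [this, norm_neg, norm_smul, Real.norm_eq_abs, abs_of_pos hε]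
        exact hεvn
      have hsum := hadd _ huv _ hεv
      rw [sub_add_cancel] at hsum
      have hle : ∀ y ∈ L, ⟪u, y⟫ = suppFn L u → suppFn L (ε • v) ≤ ε * ⟪v, y⟫ := by
        intro y hy he
        have h1 : ⟪u - ε • v, y⟫ ≤ suppFn L (u - ε • v) := inner_le_suppFn hLc hy
        rw [inner_sub_left, real_inner_smul_left, he] at h1
        linarith
      have hge : ∀ y ∈ L, ε * ⟪v, y⟫ ≤ suppFn L (ε • v) := by
        intro y hy
        have := inner_le_suppFn hLc (x := ε • v) hy
        rwa [real_inner_smul_left] at this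
      have h12 : ε * ⟪v, y₁⟫ = ε * ⟪v, y₂⟫ :=
        le_antisymm (le_trans (hge _ hy₁) (hle _ hy₂ he₂))
          (le_trans (hge _ hy₂) (hle _ hy₁ he₁))
      exact mul_left_cancel₀ (ne_of_gt hε) h12
    -- deduce y₁ = y₂
    set w := y₁ - y₂ with hw
    set c : ℝ := r / (2 * (‖w‖ + 1)) with hcdef
    have hc : 0 < c := by positivity
    have hcn : c * ‖w‖ < r := by
      rw [hcdef, div_mul_eq_mul_div, div_lt_iff₀ (by positivity)]
      nlinarith [norm_nonneg w]
    have hmem : u + c • w ∈ Metric.ball u r := by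
      simp only [Metric.mem_ball, dist_eq_norm]
      have : u + c • w - u = c • w := by abel
      rw [this, norm_smul, Real.norm_eq_abs, abs_of_pos hc]
      exact hcn
    have h1 := hinner _ hmem
    have h2 := hinner u (Metric.mem_ball_self hr)
    rw [inner_add_left, inner_add_left, real_inner_smul_left, real_inner_smul_left, h2] at h1
    have h3 : ⟪w, y₁⟫ = ⟪w, y₂⟫ := mul_left_cancel₀ (ne_of_gt hc) (by linarith)
    have h4 : ⟪w, w⟫ = 0 := by
      have h5 : (⟪w, w⟫ : ℝ) = ⟪w, y₁⟫ - ⟪w, y₂⟫ := by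
        conv_lhs => rw [hw]
        exact inner_sub_right _ _ _
      rw [h5, h3, sub_self]
    have : w = 0 := by
      rwa [inner_self_eq_zero] at h4
    have := sub_eq_zero.mp this
    exact this
  -- choose a point of the face at u₀
  obtain ⟨y₀, hy₀L, hy₀⟩ := exists_suppFn hL hLc u₀
  refine ⟨y₀, fun u hu => ?_⟩
  have huC : u ∈ C := interior_subset hu
  have hu₀C : u₀ ∈ C := interior_subset hu₀
  -- a common face point z for u and u₀
  obtain ⟨z, hzL, hz⟩ := exists_suppFn hL hLc (u + u₀)
  have hsum := hadd _ huC _ hu₀C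
  rw [inner_add_left] at hz
  have hz1 : ⟪u, z⟫ ≤ suppFn L u := inner_le_suppFn hLc hzL
  have hz2 : ⟪u₀, z⟫ ≤ suppFn L u₀ := inner_le_suppFn hLc hzL
  have hzu : ⟪u, z⟫ = suppFn L u := by linarith
  have hzu₀ : ⟪u₀, z⟫ = suppFn L u₀ := by linarith
  have hzy₀ : z = y₀ := key u₀ hu₀ z hzL y₀ hy₀L hzu₀ hy₀
  have hy₀face : ⟪u, y₀⟫ = suppFn L u := hzy₀ ▸ hzu
  ext y'
  simp only [Set.mem_setOf_eq, Set.mem_singleton_iff]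
  constructor
  · rintro ⟨hy'L, hy'⟩
    exact key u hu y' hy'L y₀ hy₀L (by rw [real_inner_comm]; exact hy') hy₀face
  · rintro rfl
    exact ⟨hy₀L, by rw [real_inner_comm]; exact hy₀face⟩
end
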